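/- P(X) ⊕ J(X) = Π: the span of the short polynomials and the ideal generated by the long polynomials form a direct sum decomposition of the polynomial ring. -/

import Mathlib

open MvPolynomial

attribute [local instance] Classical.propDecidable

noncomputable section

/-- The linear polynomial `t ↦ v ⬝ t` attached to a vector `v ∈ ℝⁿ`. -/
def lin (n : ℕ) (v : Fin n → ℝ) : MvPolynomial (Fin n) ℂ :=
  ∑ i, MvPolynomial.C (v i : ℂ) * MvPolynomial.X i

/-- `p_Y`, the product of the linear polynomials over an index set `Y`. -/
def pProd {n : ℕ} {ι : Type*} (x : ι → Fin n → ℝ) (Y : Finset ι) : MvPolynomial (Fin n) ℂ :=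
  ∏ i ∈ Y, lin n (x i)

/-- The differential operator `p(D)` (substitute `∂/∂tᵢ` for `tᵢ` in `p`). -/
def pDop {n : ℕ} (p : MvPolynomial (Fin n) ℂ) : Module.End ℂ (MvPolynomial (Fin n) ℂ) :=
  Finsupp.sum (AddMonoidAlgebra.coeff p) fun m c =>
    c • (((List.finRange n).map fun i =>
      ((MvPolynomial.pderiv i).toLinearMap : Module.End ℂ (MvPolynomial (Fin n) ℂ)) ^ m i).prod)

/-- The kernel of a polynomial ideal: all `q` with `p(D)q = 0` for every `p ∈ I`. -/
def dKer {n : ℕ} (I : Ideal (MvPolynomial (Fin n) ℂ)) : Submodule ℂ (MvPolynomial (Fin n) ℂ) :=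
  ⨅ p ∈ I, LinearMap.ker (pDop p)

/-- Standard inner product on `ℝⁿ`. -/
def dotp {n : ℕ} (u v : Fin n → ℝ) : ℝ := ∑ i, u i * v i

/-- `B` is a basis drawn from the multiset `x`. -/
def IsBasisSet {n : ℕ} {ι : Type*} (x : ι → Fin n → ℝ) (B : Finset ι) : Prop :=
  LinearIndependent ℝ (fun b : {i // i ∈ B} => x b.1) ∧ Submodule.span ℝ (x '' ↑B) = ⊤

/-- `I` is an independent subset of the multiset `x`. -/
def IsIndepSet {n : ℕ} {ι : Type*} (x : ι → Fin n → ℝ) (I : Finset ι) : Prop :=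
  LinearIndependent ℝ (fun b : {i // i ∈ I} => x b.1)

/-- `F` is a facet hyperplane of `X`. -/
def IsFacet {n : ℕ} {ι : Type*} (x : ι → Fin n → ℝ) (F : Submodule ℝ (Fin n → ℝ)) : Prop :=
  Module.finrank ℝ F = n - 1 ∧ ∃ Y : Finset ι, Submodule.span ℝ (x '' ↑Y) = F

/-- `η` is a (nonzero) normal to the subspace `F`. -/
def IsNormal {n : ℕ} (η : Fin n → ℝ) (F : Submodule ℝ (Fin n → ℝ)) : Prop :=
  η ≠ 0 ∧ ∀ v ∈ F, dotp η v = 0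

/-- `m(F)`: number of elements of `X` outside a subspace `F`. -/
def mult {n : ℕ} {ι : Type*} [Fintype ι] (x : ι → Fin n → ℝ) (F : Submodule ℝ (Fin n → ℝ)) : ℕ :=
  (Finset.univ.filter fun i => x i ∉ F).card

/-- The central ideal `I(X)`. -/
def centralIdeal {n : ℕ} {ι : Type*} [Fintype ι] (x : ι → Fin n → ℝ) :
    Ideal (MvPolynomial (Fin n) ℂ) :=
  Ideal.span {p | ∃ F η, IsFacet x F ∧ IsNormal η F ∧ p = lin n η ^ mult x F}

/-- The central `P`-space of the sub-multiset indexed by `A`. -/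
def centralPOn {n : ℕ} {ι : Type*} [Fintype ι] [DecidableEq ι] (x : ι → Fin n → ℝ)
    (A : Finset ι) : Submodule ℂ (MvPolynomial (Fin n) ℂ) :=
  Submodule.span ℂ
    {p | ∃ Y : Finset ι, Y ⊆ A ∧
      Module.finrank ℝ (Submodule.span ℝ (x '' ↑(A \ Y))) = n ∧ p = pProd x Y}

/-- `X(Y)` with respect to the order on indices. -/
def XofY {n N : ℕ} (x : Fin N → Fin n → ℝ) (Y : Finset (Fin N)) : Finset (Fin N) :=
  Finset.univ.filter fun i => i ∉ Y ∧ x i ∉ Submodule.span ℝ (x '' {j | j ∈ Y ∧ j < i})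

/-- the valuation `val(Y) = #X(Y)`. -/
def valu {n N : ℕ} (x : Fin N → Fin n → ℝ) (Y : Finset (Fin N)) : ℕ := (XofY x Y).card

/-- `Q_Y := p_{X(Y)}`. -/
def QB {n N : ℕ} (x : Fin N → Fin n → ℝ) (Y : Finset (Fin N)) : MvPolynomial (Fin n) ℂ :=
  pProd x (XofY x Y)

/-- A semi-external collection of independent sets. -/
def SemiExternal {n N : ℕ} (x : Fin N → Fin n → ℝ) (I' : Set (Finset (Fin N))) : Prop :=
  (∀ I ∈ I', IsIndepSet x I) ∧
  ∀ I ∈ I', ∀ J : Finset (Fin N), IsIndepSet x J →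
    Submodule.span ℝ (x '' ↑I) ≤ Submodule.span ℝ (x '' ↑J) → J ∈ I'

/-- `P₊(X, 𝕀')`. -/
def PplusOn {n N : ℕ} (x : Fin N → Fin n → ℝ) (I' : Set (Finset (Fin N))) :
    Submodule ℂ (MvPolynomial (Fin n) ℂ) :=
  Submodule.span ℂ {p | ∃ Y : Finset (Fin N), (∃ I ∈ I', Y ∩ I = ∅) ∧ p = pProd x Y}

/-- `Π⁰_j(S^⊥)`: homogeneous polynomials of degree `j` annihilated by directional
derivatives along `S`. -/
def homPerp (n j : ℕ) (S : Submodule ℝ (Fin n → ℝ)) : Set (MvPolynomial (Fin n) ℂ) :=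
  {p | p ∈ MvPolynomial.homogeneousSubmodule (Fin n) ℂ j ∧ ∀ η ∈ S, pDop (lin n η) p = 0}

/-- `Π⁰_j(W)`: homogeneous polynomials of degree `j` which are functions on `W`
(annihilated by derivatives along `W^⊥`). -/
def homOn (n j : ℕ) (W : Submodule ℝ (Fin n → ℝ)) : Set (MvPolynomial (Fin n) ℂ) :=
  {p | p ∈ MvPolynomial.homogeneousSubmodule (Fin n) ℂ j ∧
    ∀ η : Fin n → ℝ, (∀ w ∈ W, dotp η w = 0) → pDop (lin n η) p = 0}

/-- `S(X,𝕀')`: spans of independent sets outside `𝕀'`. -/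
def exSpans {n N : ℕ} (x : Fin N → Fin n → ℝ) (I' : Set (Finset (Fin N))) :
    Set (Submodule ℝ (Fin n → ℝ)) :=
  {S | ∃ I : Finset (Fin N), IsIndepSet x I ∧ I ∉ I' ∧ Submodule.span ℝ (x '' ↑I) = S}

/-- The external ideal `I₊(X)`. -/
def IplusIdeal {n : ℕ} {ι : Type*} [Fintype ι] (x : ι → Fin n → ℝ) :
    Ideal (MvPolynomial (Fin n) ℂ) :=
  Ideal.span {p | ∃ F η, IsFacet x F ∧ IsNormal η F ∧ p = lin n η ^ (mult x F + 1)}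

/-- The semi-external ideal `I₊(X,𝕀')`. -/
def IplusOn {n N : ℕ} (x : Fin N → Fin n → ℝ) (I' : Set (Finset (Fin N))) :
    Ideal (MvPolynomial (Fin n) ℂ) :=
  IplusIdeal x ⊔ Ideal.span {p | ∃ S ∈ exSpans x I', p ∈ homPerp n (mult x S) S}

/-- `expPart V c j`: the degree-`j` homogeneous part of `∑_{v ∈ V} c_v e_v`. -/
def expPart (n : ℕ) (V : Finset (Fin n → ℝ)) (c : (Fin n → ℝ) → ℂ) (j : ℕ) :
    MvPolynomial (Fin n) ℂ :=
  ((j.factorial : ℂ))⁻¹ • ∑ v ∈ V, c v • (lin n v) ^ j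

/-- The least space `Π(V)` of a finite point set `V`. -/
def leastSpace (n : ℕ) (V : Finset (Fin n → ℝ)) : Submodule ℂ (MvPolynomial (Fin n) ℂ) :=
  Submodule.span ℂ
    {p | ∃ (c : (Fin n → ℝ) → ℂ) (j₀ : ℕ),
      p = expPart n V c j₀ ∧ p ≠ 0 ∧ ∀ j < j₀, expPart n V c j = 0}

/-- Simplicity of the arrangement `H(X,λ)`. -/
def SimpleArrangement {n N : ℕ} (x : Fin N → Fin n → ℝ) (lam : Fin N → ℝ) : Prop :=
  ∀ Y : Finset (Fin N), (∃ t : Fin n → ℝ, ∀ i ∈ Y, dotp (x i) t = lam i) →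
    LinearIndependent ℝ (fun i : {i // i ∈ Y} => x i.1)

/-- `b` is `I`-internally active in `B`. -/
def IActive {n N : ℕ} (x : Fin N → Fin n → ℝ) (Iset B : Finset (Fin N)) (b : Fin N) : Prop :=
  b ∈ B ∧ b ∈ Iset ∧ ∀ j, x j ∉ Submodule.span ℝ (x '' ↑(B.erase b)) → j ≤ b

/-- `B` is an `I`-internal basis. -/
def IInternal {n N : ℕ} (x : Fin N → Fin n → ℝ) (Iset B : Finset (Fin N)) : Prop :=
  IsBasisSet x B ∧ ∀ b, ¬ IActive x Iset B b

/-- The semi-internal space `P₋(X,I)`. -/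
def Pminus {n N : ℕ} (x : Fin N → Fin n → ℝ) (Iset : Finset (Fin N)) :
    Submodule ℂ (MvPolynomial (Fin n) ℂ) :=
  ⨅ b ∈ Iset, centralPOn x (Finset.univ.erase b)

/-- The semi-internal ideal `I₋(X,I)`. -/
def IminusOn {n N : ℕ} (x : Fin N → Fin n → ℝ) (Iset : Finset (Fin N)) :
    Ideal (MvPolynomial (Fin n) ℂ) :=
  centralIdeal x ⊔
    Ideal.span {p | ∃ F η, IsFacet x F ∧ IsNormal η F ∧ ¬ (x '' ↑Iset ⊆ ↑F) ∧
      p = lin n η ^ (mult x F - 1)}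

/-- The semi-internal ideal `J₋(X,I)` of `I`-long polynomials. -/
def JminusOn {n N : ℕ} (x : Fin N → Fin n → ℝ) (Iset : Finset (Fin N)) :
    Ideal (MvPolynomial (Fin n) ℂ) :=
  Ideal.span {p | ∃ Y : Finset (Fin N),
    (∀ B, IInternal x Iset B → (Y ∩ B).Nonempty) ∧ p = pProd x Y}

/-- Greedy completion `ex(I)` of an independent set by the auxiliary ordered basis `b0`. -/
def exComp {n N : ℕ} (x : Fin N → Fin n → ℝ) (b0 : Fin n → Fin n → ℝ) (I : Finset (Fin N)) :
    Finset (Fin N ⊕ Fin n) :=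
  I.image Sum.inl ∪
    (Finset.univ.filter fun k : Fin n =>
      b0 k ∉ Submodule.span ℝ (x '' ↑I ∪ b0 '' {j | j < k})).image Sum.inr


/-!
`P(X) + J(X) = Π` because the sum contains `p_∅ = 1` and is stable under multiplication by
linear forms: for short `Y`, the `x_i` with `i ∉ Y` span, so `(v·t) p_Y` is a combination of the
`p_{Y ∪ {i}}`, `i ∉ Y`.

The sum is direct by counting dimensions in degrees `≤ d` for large `d`. An exchange argument
shows that `P(X)` is spanned by the products `Q_B = p_{X(B)}`, one for each basis `B`. Replacing
each `x·t` by `x·t - λ_x` for generic `λ` gives an ideal `J_λ` whose leading forms contain those of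
`J(X)` and which vanishes at the vertices of the affine arrangement `x·t = λ_x`, pairwise distinct
and one for each basis. Hence `dim J(X)_{≤d} ≤ dim Π_{≤d} - #bases ≤ dim Π_{≤d} - dim P(X)`.
-/

section LinearForms

variable {n : ℕ}

def linₗ (n : ℕ) : (Fin n → ℝ) →ₗ[ℝ] MvPolynomial (Fin n) ℂ where
  toFun := lin n
  map_add' v w := by simp only [lin, Pi.add_apply, Complex.ofReal_add, map_add, add_mul,
    Finset.sum_add_distrib]
  map_smul' a v := by
    simp only [lin, Pi.smul_apply, smul_eq_mul, Complex.ofReal_mul, map_mul, Finset.smul_sum,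
      RingHom.id_apply, ← Complex.coe_smul, smul_eq_C_mul, mul_assoc]

@[simp]
theorem linₗ_apply (v : Fin n → ℝ) : linₗ n v = lin n v := rfl

theorem lin_sum_smul {ι : Type*} (s : Finset ι) (c : ι → ℝ) (v : ι → Fin n → ℝ) :
    lin n (∑ i ∈ s, c i • v i) = ∑ i ∈ s, (c i : ℂ) • lin n (v i) := by
  simp only [← linₗ_apply, map_sum, map_smul, Complex.coe_smul]

theorem lin_single (i : Fin n) : lin n (Pi.single i 1) = X i := by
  rw [lin, Finset.sum_eq_single i (fun j _ hj => by simp [Pi.single_eq_of_ne hj]) (by simp)]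
  simp

theorem isHomogeneous_lin (v : Fin n → ℝ) : (lin n v).IsHomogeneous 1 :=
  IsHomogeneous.sum _ _ _ fun _ _ => isHomogeneous_C_mul_X _ _

theorem eval_lin (θ v : Fin n → ℝ) :
    eval (fun i => (θ i : ℂ)) (lin n v) = ((v ⬝ᵥ θ : ℝ) : ℂ) := by
  simp [lin, dotProduct]

variable {ι : Type*} (x : ι → Fin n → ℝ)

theorem pProd_insert [DecidableEq ι] {Y : Finset ι} {i : ι} (hi : i ∉ Y) :
    pProd x (insert i Y) = lin n (x i) * pProd x Y :=
  Finset.prod_insert hi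

theorem isHomogeneous_pProd (Y : Finset ι) : (pProd x Y).IsHomogeneous Y.card := by
  simpa [pProd] using IsHomogeneous.prod Y _ (fun _ => 1) fun i _ => isHomogeneous_lin (x i)

end LinearForms

section Codisjoint

variable {n : ℕ} {ι : Type*} [Fintype ι] [DecidableEq ι] (x : ι → Fin n → ℝ)

def IsShort (Y : Finset ι) : Prop :=
  Module.finrank ℝ (Submodule.span ℝ (x '' ↑(Finset.univ \ Y))) = n

def longIdeal : Ideal (MvPolynomial (Fin n) ℂ) :=
  Ideal.span {p | ∃ Y : Finset ι, ¬ IsShort x Y ∧ p = pProd x Y}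

variable {x}

theorem isShort_iff_span_eq_top {Y : Finset ι} :
    IsShort x Y ↔ Submodule.span ℝ (x '' ↑Yᶜ) = ⊤ := by
  rw [IsShort, Finset.compl_eq_univ_sdiff, Submodule.eq_top_iff_finrank_eq, Module.finrank_fin_fun]

theorem pProd_mem_centralPOn {Y : Finset ι} (hY : IsShort x Y) :
    pProd x Y ∈ centralPOn x Finset.univ :=
  Submodule.subset_span ⟨Y, Finset.subset_univ Y, hY, rfl⟩

theorem pProd_mem_longIdeal {Y : Finset ι} (hY : ¬ IsShort x Y) : pProd x Y ∈ longIdeal x :=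
  Ideal.subset_span ⟨Y, hY, rfl⟩

variable (x)

theorem pProd_mem_sup (Y : Finset ι) :
    pProd x Y ∈ centralPOn x Finset.univ ⊔ (longIdeal x).restrictScalars ℂ := by
  by_cases hY : IsShort x Y
  · exact Submodule.mem_sup_left (pProd_mem_centralPOn hY)
  · exact Submodule.mem_sup_right (pProd_mem_longIdeal hY)

theorem lin_mul_pProd_mem_sup {Y : Finset ι} (hY : IsShort x Y) (v : Fin n → ℝ) :
    lin n v * pProd x Y ∈ centralPOn x Finset.univ ⊔ (longIdeal x).restrictScalars ℂ := by
  let L := (LinearMap.mulRight ℝ (pProd x Y)).comp (linₗ n)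
  suffices h : Submodule.span ℝ (x '' ↑Yᶜ) ≤
      ((centralPOn x Finset.univ ⊔ (longIdeal x).restrictScalars ℂ).restrictScalars ℝ).comap L by
    exact h ((isShort_iff_span_eq_top.mp hY).symm ▸ Submodule.mem_top)
  rw [Submodule.span_le]
  rintro _ ⟨i, hi, rfl⟩
  rw [Finset.coe_compl, Set.mem_compl_iff, Finset.mem_coe] at hi
  rw [SetLike.mem_coe, Submodule.mem_comap, Submodule.restrictScalars_mem]
  simpa [L, ← pProd_insert x hi] using pProd_mem_sup x (insert i Y)

theorem lin_mul_mem_sup_of_mem_centralPOn (v : Fin n → ℝ) {p : MvPolynomial (Fin n) ℂ}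
    (hp : p ∈ centralPOn x Finset.univ) :
    lin n v * p ∈ centralPOn x Finset.univ ⊔ (longIdeal x).restrictScalars ℂ := by
  induction hp using Submodule.span_induction with
  | mem _ h =>
    obtain ⟨Y, -, hY, rfl⟩ := h
    exact lin_mul_pProd_mem_sup x hY v
  | zero => simp
  | add a b _ _ ha hb => simpa [mul_add] using Submodule.add_mem _ ha hb
  | smul c a _ ha => simpa [mul_smul_comm] using Submodule.smul_mem _ c ha

theorem lin_mul_mem_sup (v : Fin n → ℝ) {q : MvPolynomial (Fin n) ℂ}
    (hq : q ∈ centralPOn x Finset.univ ⊔ (longIdeal x).restrictScalars ℂ) :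
    lin n v * q ∈ centralPOn x Finset.univ ⊔ (longIdeal x).restrictScalars ℂ := by
  obtain ⟨p, hp, j, hj, rfl⟩ := Submodule.mem_sup.mp hq
  rw [mul_add]
  exact Submodule.add_mem _ (lin_mul_mem_sup_of_mem_centralPOn x v hp)
    (Submodule.mem_sup_right (Ideal.mul_mem_left _ _ hj))

theorem sup_centralPOn_longIdeal :
    centralPOn x Finset.univ ⊔ (longIdeal x).restrictScalars ℂ = ⊤ := by
  refine Submodule.eq_top_iff'.mpr fun p => ?_
  induction p using MvPolynomial.induction_on with
  | C a =>
    simpa [C_eq_smul_one, pProd] using Submodule.smul_mem _ a (pProd_mem_sup x ∅)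
  | add p q hp hq => exact Submodule.add_mem _ hp hq
  | mul_X p i hp => simpa [lin_single, mul_comm] using lin_mul_mem_sup x (Pi.single i 1) hp

end Codisjoint

theorem linearIndepOn_of_notMem_span_lt {K V ι : Type*} [DivisionRing K] [AddCommGroup V]
    [Module K V] [LinearOrder ι] (v : ι → V) (s : Finset ι)
    (h : ∀ i ∈ s, v i ∉ Submodule.span K (v '' {j | j ∈ s ∧ j < i})) :
    LinearIndepOn K v (s : Set ι) := by
  induction s using Finset.induction_on_max with
  | empty => simp
  | insert a s has ih =>
    rw [Finset.coe_insert]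
    refine (ih fun i hi => ?_).insert ?_
    · refine fun hmem => h i (Finset.mem_insert_of_mem hi) (Submodule.span_mono ?_ hmem)
      exact Set.image_mono fun j hj => ⟨Finset.mem_insert_of_mem hj.1, hj.2⟩
    · convert h a (Finset.mem_insert_self a s) using 4
      ext j
      simp only [Finset.mem_coe, Finset.mem_insert, Set.mem_ofPred_eq]
      exact ⟨fun hj => ⟨Or.inr hj, has j hj⟩, fun ⟨hj, hja⟩ => hj.resolve_left hja.ne⟩

theorem isShort_insert_erase {n : ℕ} {ι : Type*} [Fintype ι] [DecidableEq ι]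
    {x : ι → Fin n → ℝ} {Y B S : Finset ι} (hB : Submodule.span ℝ (x '' ↑B) = ⊤)
    (hBY : Disjoint B Y) (hSB : S ⊆ B) {c : ι → ℝ} {i b : ι} (hiY : i ∈ Y)
    (hi : ∑ b' ∈ S, c b' • x b' = x i) (hb : b ∈ S) (hcb : c b ≠ 0) :
    IsShort x (insert b (Y.erase i)) := by
  have hmem : ∀ j ∉ insert b (Y.erase i), x j ∈ Submodule.span ℝ (x '' ↑(insert b (Y.erase i))ᶜ) :=
    fun j hj => Submodule.subset_span ⟨j, by simp at hj ⊢; tauto, rfl⟩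
  have hB_out : ∀ b' ∈ B, b' ≠ b → b' ∉ insert b (Y.erase i) := fun b' hb' hne => by
    simp [hne, Finset.disjoint_left.mp hBY hb']
  rw [isShort_iff_span_eq_top, eq_top_iff, ← hB, Submodule.span_le]
  rintro _ ⟨b', hb', rfl⟩
  obtain rfl | hne := eq_or_ne b' b
  · rw [SetLike.mem_coe, ← Submodule.smul_mem_iff _ hcb]
    have hsplit : c b' • x b' = x i - ∑ b'' ∈ S.erase b', c b'' • x b'' := by
      rw [← hi, ← Finset.add_sum_erase S _ hb, add_sub_cancel_right]
    rw [hsplit]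
    refine Submodule.sub_mem _ (hmem i ?_) (Submodule.sum_mem _ fun b'' hb'' => ?_)
    · have hbi : b' ≠ i := fun h => Finset.disjoint_left.mp hBY hb' (h ▸ hiY)
      simp [hbi.symm]
    · exact Submodule.smul_mem _ _
        (hmem _ (hB_out _ (hSB (Finset.mem_of_mem_erase hb'')) (Finset.ne_of_mem_erase hb'')))
  · exact hmem _ (hB_out _ hb' hne)

section Greedy

variable {n N : ℕ} (x : Fin N → Fin n → ℝ)

def greedyBasis (Y : Finset (Fin N)) : Finset (Fin N) :=
  Finset.univ.filter fun i => i ∉ Y ∧ x i ∉ Submodule.span ℝ (x '' {j | j ∉ Y ∧ j < i})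

variable {x} {Y : Finset (Fin N)}

theorem notMem_of_mem_greedyBasis {i : Fin N} (hi : i ∈ greedyBasis x Y) : i ∉ Y :=
  (Finset.mem_filter.mp hi).2.1

theorem mem_span_greedyBasis_le {j : Fin N} (hj : j ∉ Y) :
    x j ∈ Submodule.span ℝ (x '' {b | b ∈ greedyBasis x Y ∧ b ≤ j}) := by
  induction j using WellFoundedLT.induction with
  | ind j ih =>
    by_cases hjG : j ∈ greedyBasis x Y
    · exact Submodule.subset_span ⟨j, ⟨hjG, le_rfl⟩, rfl⟩
    · have hspan : x j ∈ Submodule.span ℝ (x '' {l | l ∉ Y ∧ l < j}) := by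
        simpa [greedyBasis, hj] using hjG
      refine Submodule.span_le.mpr ?_ hspan
      rintro _ ⟨l, ⟨hlY, hlj⟩, rfl⟩
      refine Submodule.span_mono (Set.image_mono ?_) (ih l hlj hlY)
      exact fun b hb => ⟨hb.1, hb.2.trans hlj.le⟩

theorem span_lt_le_span_greedyBasis (i : Fin N) :
    Submodule.span ℝ (x '' {j | j ∉ Y ∧ j < i}) ≤
      Submodule.span ℝ (x '' {b | b ∈ greedyBasis x Y ∧ b < i}) := by
  rw [Submodule.span_le]
  rintro _ ⟨j, ⟨hjY, hji⟩, rfl⟩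
  refine Submodule.span_mono (Set.image_mono ?_) (mem_span_greedyBasis_le hjY)
  exact fun b hb => ⟨hb.1, hb.2.trans_lt hji⟩

theorem linearIndependent_greedyBasis : IsIndepSet x (greedyBasis x Y) := by
  refine linearIndepOn_of_notMem_span_lt x _ fun b hb hmem => ?_
  refine (Finset.mem_filter.mp hb).2.2 (Submodule.span_mono (Set.image_mono ?_) hmem)
  exact fun j hj => ⟨notMem_of_mem_greedyBasis hj.1, hj.2⟩

theorem isBasisSet_greedyBasis (hY : IsShort x Y) : IsBasisSet x (greedyBasis x Y) := by
  refine ⟨linearIndependent_greedyBasis, eq_top_iff.mpr ?_⟩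
  rw [← isShort_iff_span_eq_top.mp hY, Submodule.span_le]
  rintro _ ⟨j, hj, rfl⟩
  refine Submodule.span_mono (Set.image_mono fun b hb => hb.1) (mem_span_greedyBasis_le ?_)
  simpa using hj

theorem XofY_greedyBasis_subset : XofY x (greedyBasis x Y) ⊆ Y := by
  intro i hi
  by_contra hiY
  simp only [XofY, Finset.mem_filter, Finset.mem_univ, true_and] at hi
  refine hi.2 (span_lt_le_span_greedyBasis i ?_)
  simpa [greedyBasis, hiY] using hi.1

end Greedy

section ShortSpace

variable {n N : ℕ} {x : Fin N → Fin n → ℝ}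

/-- Writing `x i = ∑ c_b x_b` over earlier greedy basis vectors gives
`p_Y = ∑ c_b p_{Y - i + b}`, and `Y - i + b` is short whenever `c_b ≠ 0`. -/
theorem pProd_mem_span_of_mem_span_greedyBasis {Y : Finset (Fin N)} (hY : IsShort x Y)
    {i : Fin N} (hiY : i ∈ Y)
    (hi : x i ∈ Submodule.span ℝ (x '' {b | b ∈ greedyBasis x Y ∧ b < i})) :
    pProd x Y ∈ Submodule.span ℂ {p | ∃ Y' : Finset (Fin N), IsShort x Y' ∧
      ∑ j ∈ Y', (j : ℕ) < ∑ j ∈ Y, (j : ℕ) ∧ p = pProd x Y'} := by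
  set S := (greedyBasis x Y).filter (· < i)
  rw [show {b | b ∈ greedyBasis x Y ∧ b < i} = (S : Set (Fin N)) by ext; simp [S],
    Submodule.mem_span_image_finset_iff_exists_fun'] at hi
  obtain ⟨c, hc⟩ := hi
  have hexpand : pProd x Y = ∑ b ∈ S, (c b : ℂ) • pProd x (insert b (Y.erase i)) := by
    have hbY : ∀ b ∈ S, b ∉ Y.erase i := fun b hb h =>
      notMem_of_mem_greedyBasis (Finset.mem_filter.mp hb).1 (Finset.mem_of_mem_erase h)
    rw [← Finset.insert_erase hiY, pProd_insert x (Finset.notMem_erase i Y), ← hc, lin_sum_smul,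
      Finset.sum_mul, Finset.insert_erase hiY]
    exact Finset.sum_congr rfl fun b hb => by rw [pProd_insert x (hbY b hb), smul_mul_assoc]
  rw [hexpand]
  refine Submodule.sum_mem _ fun b hb => ?_
  obtain ⟨hbG, hbi⟩ := Finset.mem_filter.mp hb
  by_cases hcb : c b = 0
  · simp [hcb]
  refine Submodule.smul_mem _ _ (Submodule.subset_span ⟨_, ?_, ?_, rfl⟩)
  · exact isShort_insert_erase (isBasisSet_greedyBasis hY).2
      (Finset.disjoint_left.mpr fun _ => notMem_of_mem_greedyBasis)
      (Finset.filter_subset _ _) hiY hc hb hcb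
  · have hbY : b ∉ Y.erase i := fun h => notMem_of_mem_greedyBasis hbG (Finset.mem_of_mem_erase h)
    rw [Finset.sum_insert hbY, ← Finset.add_sum_erase Y _ hiY]
    exact Nat.add_lt_add_right hbi _

theorem pProd_mem_span_QB {Y : Finset (Fin N)} (hY : IsShort x Y) :
    pProd x Y ∈ Submodule.span ℂ (Set.range fun B : {B // IsBasisSet x B} => QB x B) := by
  induction hw : ∑ j ∈ Y, (j : ℕ) using Nat.strong_induction_on generalizing Y with
  | _ w ih =>
    by_cases hQ : Y = XofY x (greedyBasis x Y)
    · exact Submodule.subset_span ⟨⟨_, isBasisSet_greedyBasis hY⟩, congrArg (pProd x) hQ.symm⟩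
    obtain ⟨i, hiY, hiQ⟩ :=
      Finset.exists_of_ssubset (XofY_greedyBasis_subset.ssubset_of_ne (Ne.symm hQ))
    have hiG : i ∉ greedyBasis x Y := fun h => notMem_of_mem_greedyBasis h hiY
    have hi : x i ∈ Submodule.span ℝ (x '' {b | b ∈ greedyBasis x Y ∧ b < i}) := by
      simpa [XofY, hiG] using hiQ
    refine Submodule.span_le.mpr ?_ (pProd_mem_span_of_mem_span_greedyBasis hY hiY hi)
    rintro _ ⟨Y', hY', hlt, rfl⟩
    exact ih _ (hw ▸ hlt) hY' rfl

theorem finrank_centralPOn_le :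
    Module.finrank ℂ (centralPOn x Finset.univ) ≤ Fintype.card {B // IsBasisSet x B} := by
  have hle : centralPOn x Finset.univ ≤
      Submodule.span ℂ (Set.range fun B : {B // IsBasisSet x B} => QB x B) := by
    rw [centralPOn, Submodule.span_le]
    rintro _ ⟨Y, -, hY, rfl⟩
    exact pProd_mem_span_QB hY
  have := FiniteDimensional.span_of_finite ℂ
    (Set.finite_range fun B : {B // IsBasisSet x B} => QB x B)
  exact (Submodule.finrank_mono hle).trans (finrank_range_le_card _)

end ShortSpace

theorem finrank_map_add_finrank_inf_ker {K V W : Type*} [DivisionRing K] [AddCommGroup V]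
    [Module K V] [AddCommGroup W] [Module K W] (f : V →ₗ[K] W) (S : Submodule K V)
    [FiniteDimensional K S] :
    Module.finrank K (S.map f) + Module.finrank K (S ⊓ LinearMap.ker f : Submodule K V) =
      Module.finrank K S := by
  have hker : LinearMap.ker (f.comp S.subtype) = (S ⊓ LinearMap.ker f).comap S.subtype := by
    rw [LinearMap.ker_comp, Submodule.comap_inf, Submodule.comap_subtype_self, top_inf_eq]
  rw [← (f.comp S.subtype).finrank_range_add_finrank_ker, LinearMap.range_comp,
    Submodule.range_subtype, hker,
    (Submodule.comapSubtypeEquivOfLe inf_le_left).finrank_eq]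

section LeadingForms

variable {σ R : Type*} [CommSemiring R]

theorem homogeneousComponent_mul_of_isHomogeneous {g : MvPolynomial σ R} {b : ℕ}
    (hg : g.IsHomogeneous b) (c : MvPolynomial σ R) (j : ℕ) :
    homogeneousComponent j (c * g) =
      if b ≤ j then homogeneousComponent (j - b) c * g else 0 := by
  induction c using MvPolynomial.induction_on' with
  | monomial s a =>
    rw [homogeneousComponent_of_mem ((isHomogeneous_monomial a rfl).mul hg),
      homogeneousComponent_of_mem (isHomogeneous_monomial a rfl)]
    split_ifs <;> first | omega | simp
  | add p q hp hq =>
    rw [add_mul, map_add, hp, hq, map_add, add_mul]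
    split_ifs <;> simp

theorem homogeneousComponent_add_mul {h : MvPolynomial σ R} {a : ℕ}
    (hh : h.IsHomogeneous a) (g : MvPolynomial σ R) (b : ℕ) :
    homogeneousComponent (a + b) (g * h) = homogeneousComponent b g * h := by
  rw [homogeneousComponent_mul_of_isHomogeneous hh, if_pos (Nat.le_add_right a b),
    Nat.add_sub_cancel_left]

theorem restrictTotalDegree_inf_ker_homogeneousComponent (j : ℕ) :
    restrictTotalDegree σ R (j + 1) ⊓ LinearMap.ker (homogeneousComponent (j + 1)) =
      restrictTotalDegree σ R j := by
  ext f
  simp only [Submodule.mem_inf, LinearMap.mem_ker, mem_restrictTotalDegree]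
  refine ⟨fun ⟨hf, h0⟩ => Finset.sup_le fun m hm => ?_, fun hf =>
    ⟨hf.trans j.le_succ, homogeneousComponent_eq_zero _ _ (Nat.lt_succ_of_le hf)⟩⟩
  have hne : m.degree ≠ j + 1 := fun hdeg => by
    have := congrArg (coeff m) h0
    rw [coeff_homogeneousComponent, if_pos hdeg, coeff_zero] at this
    exact mem_support_iff.mp hm this
  have : m.degree ≤ j + 1 := (le_totalDegree hm).trans hf
  change m.degree ≤ j
  omega

theorem restrictTotalDegree_zero_inf_ker_homogeneousComponent :
    restrictTotalDegree σ R 0 ⊓ LinearMap.ker (homogeneousComponent 0) = ⊥ := by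
  refine eq_bot_iff.mpr fun f ⟨hf, h0⟩ => ?_
  rw [SetLike.mem_coe, mem_restrictTotalDegree, Nat.le_zero] at hf
  rw [SetLike.mem_coe, LinearMap.mem_ker,
    homogeneousComponent_eq_self (isHomogeneous_of_totalDegree_zero σ hf)] at h0
  exact (Submodule.mem_bot R).mpr h0

def leadingForms (K : Submodule R (MvPolynomial σ R)) (j : ℕ) : Submodule R (MvPolynomial σ R) :=
  (K ⊓ restrictTotalDegree σ R j).map (homogeneousComponent j)

end LeadingForms

section Filtration

variable {σ k : Type*} [Field k] [Finite σ] (K : Submodule k (MvPolynomial σ k))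

instance (j : ℕ) : Module.Finite k (leadingForms K j) :=
  have : Module.Finite k (K ⊓ restrictTotalDegree σ k j : Submodule k _) :=
    Submodule.finiteDimensional_of_le inf_le_right
  Module.Finite.map _ _

theorem finrank_inf_restrictTotalDegree_zero :
    Module.finrank k (K ⊓ restrictTotalDegree σ k 0 : Submodule k _) =
      Module.finrank k (leadingForms K 0) := by
  have := finrank_map_add_finrank_inf_ker (homogeneousComponent 0) (K ⊓ restrictTotalDegree σ k 0)
  rwa [inf_assoc, restrictTotalDegree_zero_inf_ker_homogeneousComponent, inf_bot_eq,
    finrank_bot, add_zero, eq_comm] at this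

theorem finrank_inf_restrictTotalDegree_succ (j : ℕ) :
    Module.finrank k (K ⊓ restrictTotalDegree σ k (j + 1) : Submodule k _) =
      Module.finrank k (K ⊓ restrictTotalDegree σ k j : Submodule k _) +
        Module.finrank k (leadingForms K (j + 1)) := by
  have := finrank_map_add_finrank_inf_ker (homogeneousComponent (j + 1))
    (K ⊓ restrictTotalDegree σ k (j + 1))
  rw [inf_assoc, restrictTotalDegree_inf_ker_homogeneousComponent] at this
  rw [← this, leadingForms, add_comm]

theorem finrank_inf_restrictTotalDegree_le_of_leadingForms_le
    {K₁ K₂ : Submodule k (MvPolynomial σ k)} (h : ∀ j, leadingForms K₁ j ≤ leadingForms K₂ j)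
    (d : ℕ) :
    Module.finrank k (K₁ ⊓ restrictTotalDegree σ k d : Submodule k _) ≤
      Module.finrank k (K₂ ⊓ restrictTotalDegree σ k d : Submodule k _) := by
  induction d with
  | zero =>
    rw [finrank_inf_restrictTotalDegree_zero, finrank_inf_restrictTotalDegree_zero]
    exact Submodule.finrank_mono (h 0)
  | succ d ih =>
    rw [finrank_inf_restrictTotalDegree_succ, finrank_inf_restrictTotalDegree_succ]
    exact add_le_add ih (Submodule.finrank_mono (h (d + 1)))

end Filtration

section Deformation

variable {n : ℕ} {ι : Type*} (x : ι → Fin n → ℝ) (lam : ι → ℝ)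

def shiftedProd (Y : Finset ι) : MvPolynomial (Fin n) ℂ :=
  ∏ i ∈ Y, (lin n (x i) - C (lam i : ℂ))

theorem totalDegree_shiftedProd_le (Y : Finset ι) :
    (shiftedProd x lam Y).totalDegree ≤ Y.card := by
  refine (totalDegree_finsetProd _ _).trans ?_
  rw [Finset.card_eq_sum_ones]
  refine Finset.sum_le_sum fun i _ => (totalDegree_sub _ _).trans ?_
  rw [totalDegree_C, max_le_iff]
  exact ⟨(isHomogeneous_lin (x i)).totalDegree_le, zero_le_one⟩

theorem homogeneousComponent_card_shiftedProd [DecidableEq ι] (Y : Finset ι) :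
    homogeneousComponent Y.card (shiftedProd x lam Y) = pProd x Y := by
  induction Y using Finset.induction_on with
  | empty => simp [shiftedProd, pProd]
  | insert i Y hi ih =>
    have hlow : homogeneousComponent (Y.card + 1) (shiftedProd x lam Y) = 0 :=
      homogeneousComponent_eq_zero _ _ (Nat.lt_succ_of_le (totalDegree_shiftedProd_le x lam Y))
    rw [shiftedProd, Finset.prod_insert hi, ← shiftedProd, Finset.card_insert_of_notMem hi,
      sub_mul, map_sub, homogeneousComponent_C_mul, hlow, mul_zero, sub_zero, mul_comm,
      add_comm, homogeneousComponent_add_mul (isHomogeneous_lin (x i)), ih, mul_comm,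
      pProd_insert x hi]

variable [Fintype ι] [DecidableEq ι]

def shiftedLongIdeal : Ideal (MvPolynomial (Fin n) ℂ) :=
  Ideal.span {p | ∃ Y : Finset ι, ¬ IsShort x Y ∧ p = shiftedProd x lam Y}

variable {x}

/-- The witness is `c' · shiftedProd x lam Y`, with `c'` the homogeneous part of `c` of
degree `j - #Y`. -/
theorem homogeneousComponent_mul_pProd_mem_leadingForms {Y : Finset ι} (hY : ¬ IsShort x Y)
    (c : MvPolynomial (Fin n) ℂ) (j : ℕ) :
    homogeneousComponent j (c * pProd x Y) ∈
      leadingForms ((shiftedLongIdeal x lam).restrictScalars ℂ) j := by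
  rw [homogeneousComponent_mul_of_isHomogeneous (isHomogeneous_pProd x Y)]
  split_ifs with hj
  · obtain ⟨m, rfl⟩ : ∃ m, j = m + Y.card := ⟨j - Y.card, by omega⟩
    rw [Nat.add_sub_cancel]
    have hc := homogeneousComponent_isHomogeneous m c
    refine ⟨homogeneousComponent m c * shiftedProd x lam Y,
      ⟨Ideal.mul_mem_left _ _ (Ideal.subset_span ⟨Y, hY, rfl⟩), ?_⟩, ?_⟩
    · rw [SetLike.mem_coe, mem_restrictTotalDegree]
      refine (totalDegree_mul _ _).trans ?_
      have := totalDegree_shiftedProd_le x lam Y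
      have := hc.totalDegree_le
      omega
    · rw [mul_comm, homogeneousComponent_add_mul hc, homogeneousComponent_card_shiftedProd,
        mul_comm]
  · exact Submodule.zero_mem _

theorem leadingForms_longIdeal_le (j : ℕ) :
    leadingForms ((longIdeal x).restrictScalars ℂ) j ≤
      leadingForms ((shiftedLongIdeal x lam).restrictScalars ℂ) j := by
  rintro _ ⟨f, ⟨hf, -⟩, rfl⟩
  suffices h : ∀ c, homogeneousComponent j (c * f) ∈
      leadingForms ((shiftedLongIdeal x lam).restrictScalars ℂ) j by
    simpa using h 1
  replace hf := (Submodule.restrictScalars_mem ℂ _ _).mp hf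
  induction hf using Submodule.span_induction with
  | mem _ hp =>
    obtain ⟨Y, hY, rfl⟩ := hp
    exact fun c => homogeneousComponent_mul_pProd_mem_leadingForms lam hY c j
  | zero => simp
  | add f g _ _ hf hg =>
    intro c
    simpa [mul_add] using Submodule.add_mem _ (hf c) (hg c)
  | smul a f _ hf =>
    intro c
    simpa [mul_assoc] using hf (c * a)

theorem finrank_longIdeal_inf_le (d : ℕ) :
    Module.finrank ℂ ((longIdeal x).restrictScalars ℂ ⊓ restrictTotalDegree (Fin n) ℂ d :
      Submodule ℂ _) ≤
    Module.finrank ℂ ((shiftedLongIdeal x lam).restrictScalars ℂ ⊓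
      restrictTotalDegree (Fin n) ℂ d : Submodule ℂ _) :=
  finrank_inf_restrictTotalDegree_le_of_leadingForms_le (leadingForms_longIdeal_le lam) d

end Deformation

section Vertices

variable {n : ℕ} {ι : Type*} {x : ι → Fin n → ℝ}

theorem exists_vertexMap {B : Finset ι} (hB : IsIndepSet x B) :
    ∃ θ : (ι → ℝ) →ₗ[ℝ] (Fin n → ℝ),
      (∀ lam, ∀ b ∈ B, x b ⬝ᵥ θ lam = lam b) ∧ ∀ b ∉ B, θ (Pi.single b 1) = 0 := by
  let A : Matrix B (Fin n) ℝ := Matrix.of fun b => x b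
  have hrange : LinearMap.range A.mulVecLin = ⊤ := by
    rw [Submodule.eq_top_iff_finrank_eq, Module.finrank_fintype_fun_eq_card]
    exact LinearIndependent.rank_matrix (M := A) hB
  obtain ⟨R, hR⟩ := A.mulVecLin.exists_rightInverse_of_surjective hrange
  let restrict : (ι → ℝ) →ₗ[ℝ] (B → ℝ) := LinearMap.funLeft ℝ ℝ Subtype.val
  refine ⟨R ∘ₗ restrict, fun lam b hb => ?_, fun b hb => ?_⟩
  · have := congrFun (LinearMap.congr_fun hR (restrict lam)) ⟨b, hb⟩
    simpa [A, Matrix.mulVec, restrict] using this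
  · have : restrict (Pi.single b 1) = 0 := by
      ext ⟨b', hb'⟩
      simp [restrict, Pi.single_eq_of_ne (ne_of_mem_of_not_mem hb' hb)]
    simp [this]

/-- `θ B` is the vertex cut out by `B`; that it avoids the hyperplane `x_b·t = λ_b` is, for each
`b ∉ B`, a nonzero linear condition on `λ`. -/
theorem exists_generic_vertices [Finite ι] :
    ∃ (lam : ι → ℝ) (θ : Finset ι → Fin n → ℝ),
      ∀ B, IsIndepSet x B → ∀ b, x b ⬝ᵥ θ B = lam b ↔ b ∈ B := by
  choose θ hθ hθ0 using fun B : {B : Finset ι // IsIndepSet x B} => exists_vertexMap B.2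
  let f : {p : {B // IsIndepSet x B} × ι // p.2 ∉ p.1.1} → Module.Dual ℝ (ι → ℝ) := fun p =>
    LinearMap.proj p.1.2 - dotProductEquiv ℝ (Fin n) (x p.1.2) ∘ₗ θ p.1.1
  obtain ⟨lam, hlam⟩ := Module.Dual.exists_forall_ne_zero_of_forall_exists f fun p =>
    ⟨Pi.single p.1.2 1, by simp [f, hθ0 _ _ p.2]⟩
  refine ⟨lam, fun B => if hB : IsIndepSet x B then θ ⟨B, hB⟩ lam else 0, fun B hB b => ?_⟩
  simp only [dif_pos hB]
  refine ⟨fun h => by_contra fun hb => hlam ⟨(⟨B, hB⟩, b), hb⟩ ?_, hθ ⟨B, hB⟩ lam b⟩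
  simp [f, h]

end Vertices

/-- A long `Y` meets every basis `B`, and the factor of a common element vanishes at the vertex
of `B`. -/
theorem eval_eq_zero_of_mem_shiftedLongIdeal {n : ℕ} {ι : Type*} [Fintype ι] [DecidableEq ι]
    {x : ι → Fin n → ℝ} {lam : ι → ℝ} {B : Finset ι} (hB : Submodule.span ℝ (x '' ↑B) = ⊤)
    {θ : Fin n → ℝ} (hθ : ∀ b ∈ B, x b ⬝ᵥ θ = lam b) {f : MvPolynomial (Fin n) ℂ}
    (hf : f ∈ shiftedLongIdeal x lam) : eval (fun i => (θ i : ℂ)) f = 0 := by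
  refine RingHom.mem_ker.mp ((Ideal.span_le.mpr ?_) hf)
  rintro _ ⟨Y, hY, rfl⟩
  obtain ⟨b, hbB, hbY⟩ : ∃ b ∈ B, b ∈ Y := by
    by_contra! hBY
    refine hY (isShort_iff_span_eq_top.mpr (eq_top_iff.mpr (hB ▸ Submodule.span_mono ?_)))
    exact Set.image_mono fun b hb => by simpa using hBY b hb
  rw [SetLike.mem_coe, RingHom.mem_ker, shiftedProd, map_prod]
  exact Finset.prod_eq_zero hbY (by simp [eval_lin, hθ b hbB])

section Interpolation

variable {σ k ι : Type*} [Field k] [Fintype ι] [DecidableEq ι]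

theorem exists_interpolants {pts : ι → σ → k} (hpts : Function.Injective pts) :
    ∃ q : ι → MvPolynomial σ k, (∀ i, (q i).totalDegree ≤ Fintype.card ι) ∧
      ∀ i j, eval (pts j) (q i) = 0 ↔ j ≠ i := by
  have hsep : ∀ i j, ∃ ℓ : MvPolynomial σ k, ℓ.totalDegree ≤ 1 ∧
      (i ≠ j → eval (pts i) ℓ ≠ 0 ∧ eval (pts j) ℓ = 0) := fun i j => by
    by_cases hij : i = j
    · exact ⟨1, by simp, fun h => absurd hij h⟩
    obtain ⟨s, hs⟩ := Function.ne_iff.mp (hpts.ne hij)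
    refine ⟨X s - C (pts j s), (totalDegree_sub _ _).trans ?_, fun _ => ?_⟩
    · simp
    · simp [sub_eq_zero, hs]
  choose ℓ hℓdeg hℓ using hsep
  refine ⟨fun i => ∏ j ∈ Finset.univ.erase i, ℓ i j, fun i => ?_, fun i j => ?_⟩
  · refine (totalDegree_finsetProd _ _).trans ((Finset.sum_le_sum fun j _ => hℓdeg i j).trans ?_)
    simp
  · rw [map_prod, Finset.prod_eq_zero_iff]
    constructor
    · rintro ⟨j', hj', h0⟩ rfl
      exact (hℓ j j' (Finset.ne_of_mem_erase hj').symm).1 h0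
    · exact fun hji => ⟨j, Finset.mem_erase.mpr ⟨hji, Finset.mem_univ j⟩, (hℓ i j hji.symm).2⟩

theorem finrank_inf_restrictTotalDegree_add_card_le [Finite σ] {V : Submodule k (MvPolynomial σ k)}
    {pts : ι → σ → k} (hpts : Function.Injective pts) (hV : ∀ f ∈ V, ∀ i, eval (pts i) f = 0)
    {d : ℕ} (hd : Fintype.card ι ≤ d) :
    Module.finrank k (V ⊓ restrictTotalDegree σ k d : Submodule k _) + Fintype.card ι ≤
      Module.finrank k (restrictTotalDegree σ k d) := by
  obtain ⟨q, hqdeg, hq⟩ := exists_interpolants hpts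
  have hcoeff : ∀ a : ι → k, ∑ i, a i • q i ∈ V → a = 0 := fun a ha => funext fun i => by
    have := hV _ ha i
    rw [map_sum, Finset.sum_eq_single i (fun j _ hji => by simp [(hq j i).mpr hji.symm])
      (by simp), smul_eval, mul_eq_zero] at this
    exact this.resolve_right ((hq i i).not.mpr (by simp))
  have hli : LinearIndependent k q :=
    Fintype.linearIndependent_iff.mpr fun a ha => congrFun (hcoeff a (ha ▸ V.zero_mem))
  set U := Submodule.span k (Set.range q)
  have hU : U ≤ restrictTotalDegree σ k d := Submodule.span_le.mpr <| Set.range_subset_iff.mpr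
    fun i => (mem_restrictTotalDegree _ _ _).mpr ((hqdeg i).trans hd)
  have hdisj : U ⊓ (V ⊓ restrictTotalDegree σ k d) = ⊥ := by
    refine eq_bot_iff.mpr fun f ⟨hfU, hfV, _⟩ => ?_
    obtain ⟨a, rfl⟩ := Submodule.mem_span_range_iff_exists_fun k |>.mp hfU
    simp [hcoeff a hfV]
  have : FiniteDimensional k U := Submodule.finiteDimensional_of_le hU
  have : FiniteDimensional k (V ⊓ restrictTotalDegree σ k d : Submodule k _) :=
    Submodule.finiteDimensional_of_le inf_le_right
  calc Module.finrank k (V ⊓ restrictTotalDegree σ k d : Submodule k _) + Fintype.card ι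
      = Module.finrank k (U ⊔ (V ⊓ restrictTotalDegree σ k d) : Submodule k _) := by
        have hrank := Submodule.finrank_sup_add_finrank_inf_eq U (V ⊓ restrictTotalDegree σ k d)
        rw [hdisj, finrank_bot, add_zero, finrank_span_eq_card hli] at hrank
        rw [hrank, add_comm]
    _ ≤ Module.finrank k (restrictTotalDegree σ k d) :=
        Submodule.finrank_mono (sup_le hU inf_le_right)

end Interpolation

theorem disjoint_of_finrank_add_le {K V : Type*} [DivisionRing K] [AddCommGroup V] [Module K V]
    {P J T : Submodule K V} [FiniteDimensional K T] (hPT : P ≤ T) (hPJ : P ⊔ J = ⊤)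
    (h : Module.finrank K P + Module.finrank K (J ⊓ T : Submodule K V) ≤ Module.finrank K T) :
    Disjoint P J := by
  have : FiniteDimensional K P := Submodule.finiteDimensional_of_le hPT
  have : FiniteDimensional K (J ⊓ T : Submodule K V) :=
    Submodule.finiteDimensional_of_le inf_le_right
  have hT : P ⊔ J ⊓ T = T := by rw [← sup_inf_assoc_of_le J hPT, hPJ, top_inf_eq]
  have hrank := Submodule.finrank_sup_add_finrank_inf_eq P (J ⊓ T)
  rw [hT] at hrank
  have hbot : P ⊓ (J ⊓ T) = ⊥ := Submodule.finrank_eq_zero.mp (by omega)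
  rwa [inf_comm J, ← inf_assoc, inf_eq_left.mpr hPT, ← disjoint_iff] at hbot

section Main

variable {n N : ℕ} (x : Fin N → Fin n → ℝ)

theorem centralPOn_le_restrictTotalDegree {d : ℕ} (hd : N ≤ d) :
    centralPOn x Finset.univ ≤ restrictTotalDegree (Fin n) ℂ d := by
  rw [centralPOn, Submodule.span_le]
  rintro _ ⟨Y, -, -, rfl⟩
  refine (mem_restrictTotalDegree _ _ _).mpr ((isHomogeneous_pProd x Y).totalDegree_le.trans ?_)
  simpa using (Y.card_le_univ.trans_eq (Fintype.card_fin N)).trans hd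

theorem disjoint_centralPOn_longIdeal :
    Disjoint (centralPOn x Finset.univ) ((longIdeal x).restrictScalars ℂ) := by
  obtain ⟨lam, θ, hθ⟩ := exists_generic_vertices (x := x)
  let vertex : {B // IsBasisSet x B} → Fin n → ℂ := fun B i => (θ B i : ℂ)
  have hvertex : Function.Injective vertex := fun B B' h => by
    have : θ B = θ B' := funext fun i => Complex.ofReal_injective (congrFun h i)
    exact Subtype.ext <| Finset.ext fun b => by rw [← hθ B B.2.1, ← hθ B' B'.2.1, this]
  set K := Fintype.card {B // IsBasisSet x B}
  refine disjoint_of_finrank_add_le (centralPOn_le_restrictTotalDegree x (N.le_add_right K))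
    (sup_centralPOn_longIdeal x) ?_
  calc _ ≤ K + Module.finrank ℂ ((shiftedLongIdeal x lam).restrictScalars ℂ ⊓
        restrictTotalDegree (Fin n) ℂ (N + K) : Submodule ℂ _) :=
        add_le_add finrank_centralPOn_le (finrank_longIdeal_inf_le lam _)
    _ ≤ _ := by
      rw [add_comm]
      refine finrank_inf_restrictTotalDegree_add_card_le hvertex (fun f hf B => ?_) (by omega)
      exact eval_eq_zero_of_mem_shiftedLongIdeal B.2.2 (fun b hb => (hθ B B.2.1 b).mpr hb) hf

end Main

theorem central_decomposition_general (n N : ℕ) (x : Fin N → Fin n → ℝ) :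
    IsCompl (centralPOn x (Finset.univ : Finset (Fin N)))
      ((Ideal.span {p | ∃ Y : Finset (Fin N),
          Module.finrank ℝ (Submodule.span ℝ (x '' ↑((Finset.univ : Finset (Fin N)) \ Y))) ≠ n ∧
          p = pProd x Y}).restrictScalars ℂ) :=
  ⟨disjoint_centralPOn_longIdeal x, codisjoint_iff.mpr (sup_centralPOn_longIdeal x)⟩

theorem central_decomposition (n N : ℕ) (x : Fin N → Fin n → ℝ)
    (hx0 : ∀ i, x i ≠ 0) (hx : Submodule.span ℝ (Set.range x) = ⊤) :
    IsCompl (centralPOn x (Finset.univ : Finset (Fin N)))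
      ((Ideal.span {p | ∃ Y : Finset (Fin N),
          Module.finrank ℝ (Submodule.span ℝ (x '' ↑((Finset.univ : Finset (Fin N)) \ Y))) ≠ n ∧
          p = pProd x Y}).restrictScalars ℂ) :=
  central_decomposition_general n N x
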